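/- For every natural number n and every natural number r ≥ 1, ∑_{k=0}^{n} (−1)^{k+1} · (C(n,k)/C(k+r, r)) · H_k^{(2)} = (r/(n+r)) · ( H_n · (H_{n−1+r} − H_{r−1}) − ∑_{k=0}^{n−1} H_k/(k+r) ), as an identity of real numbers. -/

import Mathlib

/-!
Write `T f n = ∑ₖ (-1)ᵏ C(n,k) f k` for the binomial transform and `w_a k = 1 / C(k + a, k)`,
taken for real `a > 0`. Pascal's rule gives `T f (n + 1) = T (f k - f (k + 1)) n`, and the weights
satisfy `w_a k - w_a (k + 1) = a / (a + 1) · w_{a+1} k`. Hence `T w_a n = a / (n + a)`, and by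
absorption `C(n,k) / (k + 1) = C(n+1,k+1) / (n + 1)` also `T (w_a k / (k + 1)) n` is a harmonic-type
sum. The difference of `w_a k · H2 k` splits into `w_{a+1} · H2` and these two known transforms, so
the identity follows by induction on `n`, with the parameter `a` raised by one at each step.
-/

open Finset

noncomputable def H : ℕ → ℝ := fun m => ∑ j ∈ range m, (1 : ℝ) / (j + 1)

noncomputable def H2 : ℕ → ℝ := fun m => ∑ j ∈ range m, (1 : ℝ) / ((j : ℝ) + 1) ^ 2

section BinomialTransform

variable {R : Type*} [CommRing R]

def binomialTransform (f : ℕ → R) (n : ℕ) : R :=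
  ∑ k ∈ range (n + 1), (-1) ^ k * n.choose k * f k

theorem binomialTransform_zero (f : ℕ → R) : binomialTransform f 0 = f 0 := by
  simp [binomialTransform]

theorem binomialTransform_sub (f g : ℕ → R) (n : ℕ) :
    binomialTransform (fun k => f k - g k) n = binomialTransform f n - binomialTransform g n := by
  simp only [binomialTransform, mul_sub, sum_sub_distrib]

theorem binomialTransform_const_mul (c : R) (f : ℕ → R) (n : ℕ) :
    binomialTransform (fun k => c * f k) n = c * binomialTransform f n := by
  simp only [binomialTransform, mul_sum]
  exact sum_congr rfl fun k _ => by ring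

theorem binomialTransform_succ (f : ℕ → R) (n : ℕ) :
    binomialTransform f (n + 1) = binomialTransform (fun k => f k - f (k + 1)) n := by
  have extend : binomialTransform f n = ∑ k ∈ range (n + 2), (-1) ^ k * n.choose k * f k := by
    rw [binomialTransform, sum_range_succ _ (n + 1), Nat.choose_succ_self]
    simp
  rw [binomialTransform_sub, extend, binomialTransform, binomialTransform, sum_range_succ',
    sum_range_succ' _ (n + 1)]
  simp only [Nat.choose_succ_succ, Nat.cast_add, pow_succ, mul_add, add_mul, sum_add_distrib,
    mul_neg_one, neg_mul, sum_neg_distrib, pow_zero, Nat.choose_zero_right, Nat.cast_one, mul_one,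
    one_mul]
  ring

theorem sum_range_binomialTransform (f : ℕ → R) (m : ℕ) :
    ∑ j ∈ range m, binomialTransform f j = ∑ k ∈ range m, (-1) ^ k * m.choose (k + 1) * f k := by
  induction m with
  | zero => simp
  | succ m ih =>
    rw [sum_range_succ, ih, binomialTransform]
    simp only [Nat.choose_succ_succ, Nat.cast_add, mul_add, add_mul, sum_add_distrib,
      sum_range_succ _ m, Nat.choose_succ_self, Nat.cast_zero, mul_zero, zero_mul, add_zero]
    ring

theorem binomialTransform_div_succ {K : Type*} [Field K] [CharZero K] (f : ℕ → K) (n : ℕ) :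
    binomialTransform (fun k => f k / (k + 1)) n =
      (∑ j ∈ range (n + 1), binomialTransform f j) / (n + 1) := by
  rw [sum_range_binomialTransform, binomialTransform, sum_div]
  refine sum_congr rfl fun k _ => ?_
  have absorb : (n.choose k : K) / (k + 1) = (n + 1).choose (k + 1) / (n + 1) := by
    rw [div_eq_div_iff (Nat.cast_add_one_ne_zero k) (Nat.cast_add_one_ne_zero n), mul_comm]
    exact_mod_cast Nat.add_one_mul_choose_eq n k
  calc (-1) ^ k * n.choose k * (f k / (k + 1)) = (-1) ^ k * ((n.choose k : K) / (k + 1)) * f k := by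
        ring
    _ = _ := by rw [absorb]; ring

end BinomialTransform

/-- `1 / C(k + a, k)`, extended to real `a`. -/
noncomputable def invChoose (a : ℝ) (k : ℕ) : ℝ :=
  ∏ j ∈ range k, (j + 1) / (a + j + 1)

theorem invChoose_zero (a : ℝ) : invChoose a 0 = 1 :=
  prod_range_zero _

theorem invChoose_succ (a : ℝ) (k : ℕ) :
    invChoose a (k + 1) = invChoose a k * ((k + 1) / (a + k + 1)) :=
  prod_range_succ _ _

theorem invChoose_natCast (r k : ℕ) : invChoose r k = 1 / (k + r).choose r := by
  induction k with
  | zero => simp [invChoose_zero]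
  | succ k ih =>
    have hk : ((k + r).choose r : ℝ) * (r + k + 1) = (k + 1 + r).choose r * (k + 1) := by
      have h := Nat.choose_mul_succ_eq (k + r) r
      rw [show k + r + 1 - r = k + 1 by omega, show k + r + 1 = k + 1 + r by omega] at h
      exact_mod_cast (by linarith :
        (k + r).choose r * (r + k + 1) = (k + 1 + r).choose r * (k + 1))
    have hpos : (0 : ℝ) < (k + r).choose r := by exact_mod_cast Nat.choose_pos (by omega)
    have hpos' : (0 : ℝ) < (k + 1 + r).choose r := by exact_mod_cast Nat.choose_pos (by omega)
    rw [invChoose_succ, ih]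
    field_simp
    linear_combination -hk

theorem invChoose_add_one {a : ℝ} (ha : 0 < a) (k : ℕ) :
    invChoose (a + 1) k = (a + 1) / (a + k + 1) * invChoose a k := by
  induction k with
  | zero =>
    rw [invChoose_zero, invChoose_zero, Nat.cast_zero, add_zero, div_self (by positivity), one_mul]
  | succ k ih =>
    rw [invChoose_succ, ih, invChoose_succ]
    push_cast
    field_simp
    ring

theorem invChoose_sub_succ {a : ℝ} (ha : 0 < a) (k : ℕ) :
    invChoose a k - invChoose a (k + 1) = a / (a + 1) * invChoose (a + 1) k := by
  rw [invChoose_succ, invChoose_add_one ha]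
  field_simp
  ring

theorem binomialTransform_invChoose {a : ℝ} (ha : 0 < a) (n : ℕ) :
    binomialTransform (invChoose a) n = a / (n + a) := by
  induction n generalizing a with
  | zero => rw [binomialTransform_zero, invChoose_zero, Nat.cast_zero, zero_add, div_self ha.ne']
  | succ n ih =>
    simp only [binomialTransform_succ, invChoose_sub_succ ha, binomialTransform_const_mul,
      ih (by linarith : 0 < a + 1)]
    push_cast
    field_simp
    ring

theorem H_zero : H 0 = 0 :=
  sum_range_zero _

theorem H_succ (m : ℕ) : H (m + 1) = H m + 1 / (m + 1) :=
  sum_range_succ _ _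

theorem H_add_sub (m n : ℕ) : H (m + n) - H m = ∑ j ∈ range n, 1 / ((j : ℝ) + (m + 1)) := by
  rw [H, H, sum_range_add_sub_sum_range]
  refine sum_congr rfl fun j _ => ?_
  push_cast
  ring_nf

theorem H2_succ (m : ℕ) : H2 (m + 1) = H2 m + 1 / (m + 1) ^ 2 :=
  sum_range_succ _ _

theorem sum_range_succ_H_div {a : ℝ} (ha : 0 < a) (n : ℕ) :
    ∑ k ∈ range (n + 1), H k / (k + a) =
      ∑ k ∈ range n, H k / (k + (a + 1)) + (H n - ∑ k ∈ range n, 1 / (k + (a + 1))) / a := by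
  have shift : ∀ k : ℕ, H (k + 1) / ((k + 1 : ℕ) + a) =
      H k / (k + (a + 1)) + (1 / (k + 1) - 1 / (k + (a + 1))) / a := by
    intro k
    rw [H_succ]
    push_cast
    field_simp
    ring
  rw [sum_range_succ', H_zero, zero_div, add_zero]
  simp only [shift, sum_add_distrib, ← sum_div, sum_sub_distrib]
  rfl

theorem binomialTransform_invChoose_mul_H2 {a : ℝ} (ha : 0 < a) (n : ℕ) :
    binomialTransform (fun k => invChoose a k * H2 k) n =
      -(a / (n + a)) * (H n * ∑ j ∈ range n, 1 / (j + a) - ∑ k ∈ range n, H k / (k + a)) := by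
  induction n generalizing a with
  | zero => simp [binomialTransform_zero, H2]
  | succ n ih =>
    have ha' : 0 < a + 1 := by linarith
    have step : ∀ k : ℕ, invChoose a k * H2 k - invChoose a (k + 1) * H2 (k + 1) =
        a / (a + 1) * (invChoose (a + 1) k * H2 k) -
          (1 / a * (invChoose a k / (k + 1)) - 1 / (a * (a + 1)) * invChoose (a + 1) k) := by
      intro k
      rw [H2_succ, invChoose_succ, invChoose_add_one ha]
      field_simp
      ring
    rw [binomialTransform_succ]
    simp only [step, binomialTransform_sub, binomialTransform_const_mul, ih ha',
      binomialTransform_div_succ, binomialTransform_invChoose ha,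
      binomialTransform_invChoose ha']
    have harmonic_shift : ∑ j ∈ range (n + 1), 1 / ((j : ℝ) + a) =
        ∑ j ∈ range n, 1 / ((j : ℝ) + (a + 1)) + 1 / a := by
      rw [sum_range_succ']
      push_cast
      simp only [zero_add, add_assoc, add_comm 1 a]
    have scaled : ∑ j ∈ range (n + 1), a / ((j : ℝ) + a) =
        a * ∑ j ∈ range (n + 1), 1 / ((j : ℝ) + a) := by
      simp only [mul_sum, mul_one_div]
    rw [sum_range_succ_H_div ha, H_succ, scaled, harmonic_shift]
    push_cast
    field_simp
    ring

theorem stmt_12 (n : ℕ) (r : ℕ) (hr : 1 ≤ r) :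
    ∑ k ∈ range (n + 1),
        (-1 : ℝ) ^ (k + 1) * ((Nat.choose n k : ℝ) / (Nat.choose (k + r) r : ℝ)) * H2 k =
      ((r : ℝ) / ((n : ℝ) + r)) *
        (H n * (H (n + r - 1) - H (r - 1)) - ∑ k ∈ range n, H k / ((k : ℝ) + r)) := by
  have lhs : ∑ k ∈ range (n + 1),
      (-1 : ℝ) ^ (k + 1) * ((Nat.choose n k : ℝ) / (Nat.choose (k + r) r : ℝ)) * H2 k =
        -binomialTransform (fun k => invChoose r k * H2 k) n := by
    rw [binomialTransform, ← sum_neg_distrib]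
    refine sum_congr rfl fun k _ => ?_
    rw [invChoose_natCast, pow_succ]
    ring
  have harmonic : H (n + r - 1) - H (r - 1) = ∑ j ∈ range n, 1 / ((j : ℝ) + r) := by
    obtain ⟨s, rfl⟩ := Nat.exists_eq_add_of_le' hr
    rw [show n + (s + 1) - 1 = s + n by omega, Nat.add_sub_cancel, H_add_sub]
    push_cast
    rfl
  rw [lhs, binomialTransform_invChoose_mul_H2 (by exact_mod_cast hr), harmonic, neg_mul, neg_neg]
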